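/- Let T be a p-string with unique smallest end-marker, w a p-string with e = |w|_p distinct p-symbols, and c ∈ Σp a p-symbol not occurring in w. Then LF_T(p) lies in the cw-interval if and only if p lies in the w-interval and L_T[p] > e. In particular, the width of the cw-interval equals the number of positions p in the w-interval with L_T[p] > e. -/

import Mathlib

/-- Symbols of a parameterized string: static symbols `s a` (from Σs) and
parameter symbols `p a` (from Σp). -/
inductive PSym where
  | s : ℕ → PSym
  | p : ℕ → PSym
deriving DecidableEq

/-- Symbols of a p-encoded string: static symbols, finite distances, and ∞. -/
inductive Enc where
  | s : ℕ → Enc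
  | fin : ℕ → Enc
  | inf : Enc
deriving DecidableEq

/-- Order embedding: static symbols < natural numbers < ∞. -/
def Enc.toPair : Enc → ℕ ×ₗ ℕ
  | .s a => toLex (0, a)
  | .fin d => toLex (1, d)
  | .inf => toLex (2, 0)

instance : LinearOrder Enc :=
  LinearOrder.lift' Enc.toPair (by
    rintro (a | a | _) (b | b | _) h <;>
      simp_all [Enc.toPair, toLex_inj, Prod.ext_iff])

/-- Largest position `j < i` (0-based) carrying the same symbol as position `i`. -/
def prevOcc (w : List PSym) (i : ℕ) : Option ℕ :=
  ((List.range i).filter (fun j => w[j]? = w[i]?)).max?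

/-- The p-encoding of position `i` (0-based) of `w`. -/
def pencSym (w : List PSym) (i : ℕ) : Enc :=
  match w[i]? with
  | some (PSym.s a) => Enc.s a
  | some (PSym.p _) =>
    match prevOcc w i with
    | some j => Enc.fin (i - j)
    | none => Enc.inf
  | none => Enc.inf

/-- The p-encoding ⟨w⟩ of a p-string `w`. -/
def penc (w : List PSym) : List Enc :=
  (List.range w.length).map (pencSym w)

/-- Lexicographic (strict) order on p-encoded strings. -/
def lexLt (x y : List Enc) : Prop := List.Lex (· < ·) x y

def lexLe (x y : List Enc) : Prop := lexLt x y ∨ x = y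

/-- Length of the longest common prefix. -/
def lcp {α : Type*} [DecidableEq α] : List α → List α → ℕ
  | a :: x, b :: y => if a = b then lcp x y + 1 else 0
  | _, _ => 0

/-- Number of ∞'s in the longest common prefix of two p-encoded strings. -/
def lcpInf (x y : List Enc) : ℕ := (x.take (lcp x y)).count Enc.inf

/-- Number of distinct p-symbols occurring in `w` (denoted |w|_p). -/
def distinctP (w : List PSym) : ℕ :=
  (w.filterMap (fun s => match s with | PSym.p a => some a | PSym.s _ => none)).dedup.length

/-- For `w` starting with a p-symbol: the rank of `w[1]` among the distinct
p-symbols of `w[1..h+1]`, where `h+1 = min{|w|, second occurrence of w[1] in w}`. -/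
def fceRank (w : List PSym) : ℕ :=
  match w with
  | [] => 0
  | c :: rest => distinctP ((c :: rest).take (min (c :: rest).length (2 + rest.idxOf c)))

/-- The function fce from the paper; `fce ε = $` is modelled as `Enc.s 0`. -/
def fce (w : List PSym) : Enc :=
  match w with
  | [] => Enc.s 0
  | PSym.s a :: _ => Enc.s a
  | w => Enc.fin (fceRank w)

/-!
Let a suffix be `c' u`. If `c'` is static both sides fail, so let `c'` be a p-symbol and `k` the
position of its first occurrence in `u` (`k = |u|` if there is none). Then `⟨c' u⟩` is `∞ ⟨u⟩`
with the entry at `k` replaced by `k + 1`, and `fce (c' u) = |c' u[0..k]|_p`; the `∞`s of a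
p-encoding count its distinct p-symbols. If `k ≥ |w|`, prefixing by `⟨c w⟩ = ∞ ⟨w⟩` is prefixing
by `⟨w⟩`, and then `fce (c' u) ≥ |u[0..|w|)|_p + 1 = e + 1`. If `k < |w|`, the entry `k + 1`
cannot match position `k` of `⟨w⟩`, where every distance is at most `k`, and
`fce (c' u) = |w[0..k]|_p ≤ e` whenever `⟨w⟩` prefixes `⟨u⟩`. Counting through the bijection LF
gives the width.
-/

theorem Enc.fin_lt_fin {d e : ℕ} : Enc.fin d < Enc.fin e ↔ d < e := by
  change Enc.toPair _ < Enc.toPair _ ↔ _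
  simp [Enc.toPair, Prod.Lex.lt_iff]

theorem Enc.not_fin_lt_s (d a : ℕ) : ¬ Enc.fin d < Enc.s a := by
  change ¬ Enc.toPair _ < Enc.toPair _
  simp [Enc.toPair, Prod.Lex.lt_iff]

theorem List.notMem_take_idxOf {α : Type*} [BEq α] [LawfulBEq α] (a : α) (l : List α) :
    a ∉ l.take (l.idxOf a) := by
  by_cases ha : a ∈ l
  · rw [List.mem_take_iff_idxOf_lt ha]
    exact lt_irrefl _
  · exact fun h => ha (List.mem_of_mem_take h)

section PEncoding

variable {u w : List PSym} {i : ℕ}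

theorem prevOcc_eq_none_iff : prevOcc w i = none ↔ ∀ j < i, w[j]? ≠ w[i]? := by
  simp [prevOcc, List.filter_eq_nil_iff]

theorem prevOcc_eq_some_iff {j : ℕ} : prevOcc w i = some j ↔
    (j < i ∧ w[j]? = w[i]?) ∧ ∀ k < i, w[k]? = w[i]? → k ≤ j := by
  rw [prevOcc, List.max?_eq_some_iff]
  simp only [List.mem_filter, List.mem_range, decide_eq_true_eq]
  tauto

theorem prevOcc_cons_succ {c : PSym} (h : u[i]? ≠ some c) :
    prevOcc (c :: u) (i + 1) = (prevOcc u i).map (· + 1) := by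
  rcases hp : prevOcc u i with _ | j
  · rw [Option.map_none, prevOcc_eq_none_iff] at *
    rintro (_ | k) hk
    · simpa [eq_comm] using h
    · simpa using hp k (by omega)
  · rw [Option.map_some, prevOcc_eq_some_iff] at *
    refine ⟨by simpa using hp.1, ?_⟩
    rintro (_ | k) hk hck
    · omega
    · simpa using hp.2 k (by omega) (by simpa using hck)

theorem prevOcc_congr {v : List PSym} (h : ∀ j ≤ i, u[j]? = v[j]?) :
    prevOcc u i = prevOcc v i := by
  unfold prevOcc
  congr 1
  refine List.filter_congr fun j hj => ?_
  rw [h j (by simp at hj; omega), h i le_rfl]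

theorem prevOcc_append_singleton_eq_none_iff {x : PSym} :
    prevOcc (u ++ [x]) u.length = none ↔ x ∉ u := by
  rw [prevOcc_eq_none_iff, List.mem_iff_getElem?, not_exists,
    List.getElem?_append_right le_rfl, Nat.sub_self]
  constructor
  · intro h j hj
    have hju : j < u.length := (List.getElem?_eq_some_iff.1 hj).1
    exact h j hju (by rwa [List.getElem?_append_left hju])
  · intro h j hj
    rw [List.getElem?_append_left hj]
    exact h j

theorem pencSym_congr {v : List PSym} (h : ∀ j ≤ i, u[j]? = v[j]?) :
    pencSym u i = pencSym v i := by
  unfold pencSym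
  rw [h i le_rfl, prevOcc_congr h]

theorem pencSym_cons_succ {c : PSym} (h : u[i]? ≠ some c) :
    pencSym (c :: u) (i + 1) = pencSym u i := by
  unfold pencSym
  rw [List.getElem?_cons_succ, prevOcc_cons_succ h]
  rcases prevOcc u i with _ | j <;> simp

theorem pencSym_cons_s_succ (a : ℕ) : pencSym (PSym.s a :: u) (i + 1) = pencSym u i := by
  by_cases h : u[i]? = some (PSym.s a)
  · simp [pencSym, h]
  · exact pencSym_cons_succ h

theorem pencSym_le_of_eq_fin {d : ℕ} (h : pencSym w i = Enc.fin d) : d ≤ i := by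
  unfold pencSym at h
  split at h <;> (try split at h) <;> simp only [reduceCtorEq, Enc.fin.injEq] at h
  omega

theorem pencSym_cons_idxOf_succ {b : ℕ} (hb : PSym.p b ∈ u) :
    pencSym (PSym.p b :: u) (u.idxOf (PSym.p b) + 1) = Enc.fin (u.idxOf (PSym.p b) + 1) := by
  have hprev : prevOcc (PSym.p b :: u) (u.idxOf (PSym.p b) + 1) = some 0 := by
    rw [prevOcc_eq_some_iff]
    refine ⟨⟨by omega, by simp [List.getElem?_idxOf hb]⟩, ?_⟩
    rintro (_ | k) hk hkb
    · rfl
    · refine absurd (List.mem_iff_getElem?.2 ⟨k, ?_⟩) (List.notMem_take_idxOf (PSym.p b) u)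
      rw [List.getElem?_take_of_lt (by omega)]
      simpa [List.getElem?_idxOf hb] using hkb
  simp [pencSym, List.getElem?_idxOf hb, hprev]

theorem penc_length (w : List PSym) : (penc w).length = w.length := by
  simp [penc]

theorem pencSym_append_p_eq_inf_iff {b : ℕ} :
    pencSym (u ++ [PSym.p b]) u.length = Enc.inf ↔ PSym.p b ∉ u := by
  rw [← prevOcc_append_singleton_eq_none_iff]
  unfold pencSym
  rw [List.getElem?_append_right le_rfl, Nat.sub_self]
  rcases prevOcc (u ++ [PSym.p b]) u.length <;> simp

theorem penc_cons {c : PSym} (h : ∀ i < u.length, pencSym (c :: u) (i + 1) = pencSym u i) :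
    penc (c :: u) = pencSym (c :: u) 0 :: penc u := by
  rw [penc, List.length_cons, List.range_succ_eq_map, List.map_cons, List.map_map, penc]
  congr 1
  exact List.map_congr_left fun i hi => h i (List.mem_range.1 hi)

theorem penc_cons_s (a : ℕ) (u : List PSym) : penc (PSym.s a :: u) = Enc.s a :: penc u := by
  rw [penc_cons fun i _ => pencSym_cons_s_succ a]
  rfl

theorem penc_cons_p_of_notMem {b : ℕ} (hb : PSym.p b ∉ u) :
    penc (PSym.p b :: u) = Enc.inf :: penc u := by
  rw [penc_cons fun i _ => pencSym_cons_succ fun h => hb (List.mem_of_getElem? h)]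
  rfl

theorem penc_take (u : List PSym) (m : ℕ) : penc (u.take m) = (penc u).take m := by
  rw [penc, penc, ← List.map_take, List.take_range, List.length_take]
  exact List.map_congr_left fun i hi =>
    pencSym_congr fun j hj => List.getElem?_take_of_lt (by simp at hi; omega)

theorem penc_append_singleton (u : List PSym) (x : PSym) :
    penc (u ++ [x]) = penc u ++ [pencSym (u ++ [x]) u.length] := by
  rw [penc, List.length_append, List.length_singleton, List.range_succ, List.map_append,
    List.map_singleton, penc]
  congr 1
  exact List.map_congr_left fun i hi =>
    pencSym_congr fun j hj => List.getElem?_append_left (by simp at hi; omega)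

end PEncoding

section DistinctP

variable {u v w : List PSym}

def pNames (w : List PSym) : Finset ℕ :=
  (w.filterMap fun s => match s with | PSym.p a => some a | PSym.s _ => none).toFinset

theorem distinctP_eq_card_pNames (w : List PSym) : distinctP w = (pNames w).card :=
  (List.card_toFinset _).symm

theorem mem_pNames {b : ℕ} : b ∈ pNames w ↔ PSym.p b ∈ w := by
  simp only [pNames, List.mem_toFinset, List.mem_filterMap]
  constructor
  · rintro ⟨_ | a, hx, hb⟩ <;> simp_all
  · exact fun hb => ⟨_, hb, rfl⟩

theorem distinctP_mono (h : u.Sublist v) : distinctP u ≤ distinctP v := by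
  rw [distinctP_eq_card_pNames, distinctP_eq_card_pNames]
  exact Finset.card_le_card fun b hb => mem_pNames.2 (h.subset (mem_pNames.1 hb))

theorem distinctP_cons_p (b : ℕ) (u : List PSym) :
    distinctP (PSym.p b :: u) = if PSym.p b ∈ u then distinctP u else distinctP u + 1 := by
  have : pNames (PSym.p b :: u) = insert b (pNames u) := by
    ext; simp [mem_pNames]
  rw [distinctP_eq_card_pNames, distinctP_eq_card_pNames, this, Finset.card_insert_eq_ite]
  simp only [mem_pNames]

theorem distinctP_append_p (u : List PSym) (b : ℕ) :
    distinctP (u ++ [PSym.p b]) = if PSym.p b ∈ u then distinctP u else distinctP u + 1 := by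
  rw [← distinctP_cons_p, distinctP_eq_card_pNames, distinctP_eq_card_pNames]
  congr 1
  ext; simp [mem_pNames, or_comm]

theorem distinctP_append_s (u : List PSym) (a : ℕ) :
    distinctP (u ++ [PSym.s a]) = distinctP u := by
  rw [distinctP_eq_card_pNames, distinctP_eq_card_pNames]
  congr 1
  ext; simp [mem_pNames]

theorem count_inf_penc (u : List PSym) : (penc u).count Enc.inf = distinctP u := by
  induction u using List.reverseRecOn with
  | nil => rfl
  | append_singleton u x ih =>
    rw [penc_append_singleton, List.count_append, ih, List.count_singleton]
    rcases x with a | b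
    · simp [pencSym, distinctP_append_s]
    · by_cases hb : PSym.p b ∈ u <;> simp [distinctP_append_p, pencSym_append_p_eq_inf_iff, hb]

theorem distinctP_eq_of_penc_eq (h : penc u = penc v) : distinctP u = distinctP v := by
  rw [← count_inf_penc, h, count_inf_penc]

theorem distinctP_take_of_penc_prefix (h : penc w <+: penc u) :
    distinctP (u.take w.length) = distinctP w := by
  refine distinctP_eq_of_penc_eq ?_
  rw [penc_take, ← penc_length, (List.prefix_iff_eq_take.1 h).symm]

end DistinctP

section Prefix

variable {u w : List PSym} {b : ℕ}

theorem fceRank_cons_p (b : ℕ) (u : List PSym) :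
    fceRank (PSym.p b :: u) = distinctP (PSym.p b :: u.take (u.idxOf (PSym.p b) + 1)) := by
  rw [fceRank, min_comm, ← List.take_eq_take_min, Nat.add_comm, List.take_succ_cons]

theorem getElem_penc {i : ℕ} (h : i < (penc w).length) : (penc w)[i] = pencSym w i := by
  simp [penc]

theorem take_penc_cons_p_of_notMem_take {m : ℕ} (hb : PSym.p b ∉ u.take m) :
    (penc (PSym.p b :: u)).take (m + 1) = Enc.inf :: (penc u).take m := by
  rw [← penc_take, List.take_succ_cons, penc_cons_p_of_notMem hb, penc_take]

theorem cons_inf_prefix_penc_cons_p_iff_of_length_le (hw : w.length ≤ u.idxOf (PSym.p b)) :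
    Enc.inf :: penc w <+: penc (PSym.p b :: u) ↔
      penc w <+: penc u ∧
        distinctP w < distinctP (PSym.p b :: u.take (u.idxOf (PSym.p b) + 1)) := by
  have hb : PSym.p b ∉ u.take w.length :=
    fun h => List.notMem_take_idxOf _ u ((List.take_sublist_take_left hw).subset h)
  have hprefix : Enc.inf :: penc w <+: penc (PSym.p b :: u) ↔ penc w <+: penc u := by
    rw [List.prefix_iff_eq_take, List.prefix_iff_eq_take, List.length_cons, penc_length,
      take_penc_cons_p_of_notMem_take hb, List.cons_inj_right]
  rw [hprefix]
  refine ⟨fun h => ⟨h, ?_⟩, And.left⟩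
  calc distinctP w = distinctP (u.take w.length) := (distinctP_take_of_penc_prefix h).symm
    _ < distinctP (PSym.p b :: u.take w.length) := by rw [distinctP_cons_p, if_neg hb]; omega
    _ ≤ _ := distinctP_mono ((List.take_sublist_take_left (by omega)).cons_cons _)

theorem not_cons_inf_prefix_penc_cons_p_of_idxOf_lt (hw : u.idxOf (PSym.p b) < w.length) :
    ¬ Enc.inf :: penc w <+: penc (PSym.p b :: u) := by
  intro h
  have hku : u.idxOf (PSym.p b) < u.length := by
    have := h.length_le
    simp only [List.length_cons, penc_length] at this
    omega
  have hk := h.getElem (i := u.idxOf (PSym.p b) + 1) (by simp [penc_length, hw])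
  rw [List.getElem_cons_succ, getElem_penc, getElem_penc,
    pencSym_cons_idxOf_succ (List.idxOf_lt_length_iff.1 hku)] at hk
  have := pencSym_le_of_eq_fin hk
  omega

theorem distinctP_cons_p_take_le_of_idxOf_lt (hw : u.idxOf (PSym.p b) < w.length)
    (h : penc w <+: penc u) :
    distinctP (PSym.p b :: u.take (u.idxOf (PSym.p b) + 1)) ≤ distinctP w := by
  set k := u.idxOf (PSym.p b)
  have hku : k < u.length := lt_of_lt_of_le hw (penc_length w ▸ penc_length u ▸ h.length_le)
  have hb : PSym.p b ∈ u.take (k + 1) :=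
    (List.mem_take_iff_idxOf_lt (List.idxOf_lt_length_iff.1 hku)).2 (Nat.lt_succ_self k)
  have htake : penc (u.take (k + 1)) = penc (w.take (k + 1)) := by
    rw [penc_take, penc_take]
    exact ((h.take (k + 1)).eq_of_length (by simp [penc_length]; omega)).symm
  calc distinctP (PSym.p b :: u.take (k + 1)) = distinctP (w.take (k + 1)) := by
        rw [distinctP_cons_p, if_pos hb, distinctP_eq_of_penc_eq htake]
    _ ≤ distinctP w := distinctP_mono (List.take_sublist _ _)

theorem penc_cons_p_prefix_iff {a : ℕ} (ha : PSym.p a ∉ w) (x : PSym) (u : List PSym) :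
    penc (PSym.p a :: w) <+: penc (x :: u) ↔
      penc w <+: penc u ∧ Enc.fin (distinctP w) < fce (x :: u) := by
  rw [penc_cons_p_of_notMem ha]
  rcases x with b | b
  · simp [penc_cons_s, fce, Enc.not_fin_lt_s]
  · rw [show fce (PSym.p b :: u) = Enc.fin (fceRank (PSym.p b :: u)) from rfl, Enc.fin_lt_fin,
      fceRank_cons_p]
    rcases le_or_gt w.length (u.idxOf (PSym.p b)) with hw | hw
    · exact cons_inf_prefix_penc_cons_p_iff_of_length_le hw
    · exact iff_of_false (not_cons_inf_prefix_penc_cons_p_of_idxOf_lt hw)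
        fun h => (distinctP_cons_p_take_le_of_idxOf_lt hw h.1).not_gt h.2

end Prefix

theorem Finset.card_filter_eq_of_bijOn {α : Type*} {s : Finset α} {f : α → α}
    (hf : Set.BijOn f s s) {P Q : α → Prop} [DecidablePred P] [DecidablePred Q]
    (h : ∀ x ∈ s, P (f x) ↔ Q x) : (s.filter P).card = (s.filter Q).card := by
  refine (Finset.card_nbij f (fun x hx => ?_) (hf.injOn.mono ?_) fun y hy => ?_).symm
  · rw [Finset.mem_coe, Finset.mem_filter] at hx ⊢
    exact ⟨hf.mapsTo hx.1, (h x hx.1).2 hx.2⟩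
  · exact Finset.coe_subset.2 (Finset.filter_subset _ _)
  · rw [Finset.mem_coe, Finset.mem_filter] at hy
    obtain ⟨x, hx, rfl⟩ := hf.surjOn hy.1
    exact ⟨x, by simpa using ⟨hx, (h x hx).1 hy.2⟩, rfl⟩

theorem bijOn_LF {n : ℕ} {R Rinv LF : ℕ → ℕ} (hdom : ∀ i < n, Rinv i < n)
    (hRdom : ∀ p < n, R p < n) (hRinv : ∀ i < n, R (Rinv i) = i) (hR : ∀ p < n, Rinv (R p) = p)
    (hLF : ∀ i < n, LF i = if Rinv i = 0 then R (n - 1) else R (Rinv i - 1)) :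
    Set.BijOn LF (Set.Iio n) (Set.Iio n) := by
  have hRinvBij : Set.BijOn Rinv (Set.Iio n) (Set.Iio n) := Set.InvOn.bijOn ⟨hRinv, hR⟩ hdom hRdom
  have hRBij : Set.BijOn R (Set.Iio n) (Set.Iio n) := Set.InvOn.bijOn ⟨hR, hRinv⟩ hRdom hdom
  have hpredBij : Set.BijOn (fun k => if k = 0 then n - 1 else k - 1) (Set.Iio n) (Set.Iio n) :=
    Set.InvOn.bijOn (f' := fun k => if k + 1 = n then 0 else k + 1)
      ⟨fun k hk => by grind, fun k hk => by grind⟩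
      (fun k hk => by grind) (fun k hk => by grind)
  refine (hRBij.comp (hpredBij.comp hRinvBij)).congr fun i hi => ?_
  simp [hLF i hi, apply_ite R]

theorem stmt19_general (T : List PSym) (n : ℕ) (hn : n = T.length)
    -- `$` (modelled as `PSym.s 0`, the smallest symbol) is the end-marker of `T`
    (hend : T.getLast? = some (PSym.s 0))
    -- `Rinv i` is the (0-based) starting position of the lexicographically
    -- (i+1)-st p-encoded suffix of `T`
    (Rinv : ℕ → ℕ) (hdom : ∀ i < n, Rinv i < n)
    -- `R` is the rank function, the inverse of `Rinv`
    (R : ℕ → ℕ) (hRdom : ∀ p < n, R p < n)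
    (hRinv : ∀ i < n, R (Rinv i) = i) (hR : ∀ p < n, Rinv (R p) = p)
    -- the pBWT array `L`:  L i = fce (T[R⁻¹(i)−1..])  (with T[0..] := $)
    (L : ℕ → Enc)
    (hL : ∀ i < n, L i = fce (if Rinv i = 0 then [PSym.s 0] else T.drop (Rinv i - 1)))
    -- the LF-mapping
    (LF : ℕ → ℕ)
    (hLF : ∀ i < n, LF i = if Rinv i = 0 then R (n - 1) else R (Rinv i - 1))
    -- a p-symbol c not occurring in w; e = |w|_p
    (w : List PSym) (a : ℕ) (hnocc : PSym.p a ∉ w)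
    (e : ℕ) (he : e = distinctP w)
    -- [l..r] is the w-interval: the maximal interval of ranks whose
    -- p-encoded suffixes are prefixed by ⟨w⟩
    (l r : ℕ)
    (hwint : ∀ q < n, (l ≤ q ∧ q ≤ r ↔ penc w <+: penc (T.drop (Rinv q))))
    -- [l'..r'] is the cw-interval
    (l' r' : ℕ)
    (hcwint : ∀ q < n,
      (l' ≤ q ∧ q ≤ r' ↔ penc (PSym.p a :: w) <+: penc (T.drop (Rinv q))))
 :
    (∀ p < n, (l' ≤ LF p ∧ LF p ≤ r') ↔ (l ≤ p ∧ p ≤ r ∧ Enc.fin e < L p)) ∧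
    -- in particular, the width of the cw-interval equals the number of
    -- positions p in the w-interval with L p > e
    ((Finset.range n).filter (fun q => l' ≤ q ∧ q ≤ r')).card =
      ((Finset.range n).filter
        (fun q => l ≤ q ∧ q ≤ r ∧ Enc.fin e < L q)).card := by
  have hlast : T.drop (n - 1) = [PSym.s 0] := by
    have hT : T ≠ [] := by rintro rfl; simp at hend
    rw [hn, List.drop_length_sub_one hT, List.singleton_inj, ← Option.some_inj,
      ← List.getLast?_eq_some_getLast, hend]
  have key : ∀ p < n, (l' ≤ LF p ∧ LF p ≤ r') ↔ (l ≤ p ∧ p ≤ r ∧ Enc.fin e < L p) := by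
    intro p hp
    have hRp := hdom p hp
    rw [← and_assoc, hwint p hp, hL p hp, he, hLF p hp]
    split_ifs
    · rw [hcwint _ (hRdom _ (by omega)), hR _ (by omega), hlast, penc_cons_p_prefix_iff hnocc]
      simp [fce, Enc.not_fin_lt_s]
    · rw [hcwint _ (hRdom _ (by omega)), hR _ (by omega), List.drop_eq_getElem_cons (by omega),
        Nat.sub_add_cancel (by omega), penc_cons_p_prefix_iff hnocc]
  refine ⟨key, Finset.card_filter_eq_of_bijOn ?_ fun p hp => key p (Finset.mem_range.1 hp)⟩
  rw [Finset.coe_range]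
  exact bijOn_LF hdom hRdom hRinv hR hLF

theorem stmt19 (T : List PSym) (n : ℕ) (hn : n = T.length)
    -- `$` (modelled as `PSym.s 0`, the smallest symbol) is the end-marker of `T`
    (hend : T.getLast? = some (PSym.s 0))
    (huniq : ∀ i, i + 1 < n → T[i]? ≠ some (PSym.s 0))
    -- `Rinv i` is the (0-based) starting position of the lexicographically
    -- (i+1)-st p-encoded suffix of `T`
    (Rinv : ℕ → ℕ) (hdom : ∀ i < n, Rinv i < n)
    (hsorted : ∀ i j, i < j → j < n →
      lexLt (penc (T.drop (Rinv i))) (penc (T.drop (Rinv j))))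
    -- `R` is the rank function, the inverse of `Rinv`
    (R : ℕ → ℕ) (hRdom : ∀ p < n, R p < n)
    (hRinv : ∀ i < n, R (Rinv i) = i) (hR : ∀ p < n, Rinv (R p) = p)
    -- the pBWT array `L`:  L i = fce (T[R⁻¹(i)−1..])  (with T[0..] := $)
    (L : ℕ → Enc)
    (hL : ∀ i < n, L i = fce (if Rinv i = 0 then [PSym.s 0] else T.drop (Rinv i - 1)))
    -- the LF-mapping
    (LF : ℕ → ℕ)
    (hLF : ∀ i < n, LF i = if Rinv i = 0 then R (n - 1) else R (Rinv i - 1))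
    -- a p-symbol c not occurring in w; e = |w|_p
    (w : List PSym) (a : ℕ) (hnocc : PSym.p a ∉ w)
    (e : ℕ) (he : e = distinctP w)
    -- [l..r] is the w-interval: the maximal interval of ranks whose
    -- p-encoded suffixes are prefixed by ⟨w⟩
    (l r : ℕ) (hr : r < n)
    (hwint : ∀ q < n, (l ≤ q ∧ q ≤ r ↔ penc w <+: penc (T.drop (Rinv q))))
    -- [l'..r'] is the cw-interval
    (l' r' : ℕ) (hr' : r' < n)
    (hcwint : ∀ q < n,
      (l' ≤ q ∧ q ≤ r' ↔ penc (PSym.p a :: w) <+: penc (T.drop (Rinv q))))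
 :
    (∀ p < n, (l' ≤ LF p ∧ LF p ≤ r') ↔ (l ≤ p ∧ p ≤ r ∧ Enc.fin e < L p)) ∧
    -- in particular, the width of the cw-interval equals the number of
    -- positions p in the w-interval with L p > e
    ((Finset.range n).filter (fun q => l' ≤ q ∧ q ≤ r')).card =
      ((Finset.range n).filter
        (fun q => l ≤ q ∧ q ≤ r ∧ Enc.fin e < L q)).card :=
  stmt19_general T n hn hend Rinv hdom R hRdom hRinv hR L hL LF hLF w a hnocc e he l r hwint l' r'
    hcwint
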